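/- Every dominant region of the k-Catalan arrangement of a crystallographic root system of rank n has at most n floors and at most n ceilings. -/

import Mathlib

open scoped Pointwise RealInnerProductSpace

/-- A crystallographic root system together with a choice of simple system. -/
structure RootSystemData (V : Type*) [NormedAddCommGroup V] [InnerProductSpace ℝ V] where
  Φ : Set V
  S : Set V
  finite : Φ.Finite
  ne_zero : ∀ α ∈ Φ, α ≠ 0
  reflect_mem : ∀ α ∈ Φ, ∀ β ∈ Φ, β - (2 * (inner ℝ β α : ℝ) / (inner ℝ α α : ℝ)) • α ∈ Φ
  crystal : ∀ α ∈ Φ, ∀ β ∈ Φ, ∃ m : ℤ, 2 * (inner ℝ β α : ℝ) / (inner ℝ α α : ℝ) = (m : ℝ)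
  reduced : ∀ α ∈ Φ, ∀ t : ℝ, t • α ∈ Φ → t = 1 ∨ t = -1
  S_sub : S ⊆ Φ
  S_indep : LinearIndependent ℝ ((↑) : S → V)
  decomp : ∀ α ∈ Φ, α ∈ AddSubmonoid.closure S ∨ -α ∈ AddSubmonoid.closure S

namespace RootSystemData

variable {V : Type*} [NormedAddCommGroup V] [InnerProductSpace ℝ V] (D : RootSystemData V)

/-- The positive roots. -/
def pos : Set V := {α ∈ D.Φ | α ∈ AddSubmonoid.closure D.S}

/-- The root poset order: `α ≤ β` iff `β - α` is a nonnegative integer combination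
of simple roots. -/
def rle (α β : V) : Prop := β - α ∈ AddSubmonoid.closure D.S

/-- An (order) ideal of the root poset. -/
def IsIdeal (I : Set V) : Prop :=
  I ⊆ D.pos ∧ ∀ α ∈ I, ∀ β ∈ D.pos, D.rle β α → β ∈ I

/-- The order filters complementary to a chain of ideals, with the conventions
`J 0 = Φ⁺` (as `I 0 = ∅`) and `J i = J k` for `i > k`. -/
def Jf (k : ℕ) (I : ℕ → Set V) (i : ℕ) : Set V := D.pos \ I (min i k)

/-- A geometric chain of `k` ideals in the root poset. -/
structure IsGeomChain (k : ℕ) (I : ℕ → Set V) : Prop where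
  zero : I 0 = ∅
  ideal : ∀ i, 1 ≤ i → i ≤ k → D.IsIdeal (I i)
  mono : ∀ i j, i ≤ j → j ≤ k → I i ⊆ I j
  geomI : ∀ i j, i + j ≤ k → (I i + I j) ∩ D.pos ⊆ I (i + j)
  geomJ : ∀ i j, (D.Jf k I i + D.Jf k I j) ∩ D.pos ⊆ D.Jf k I (i + j)

/-- A chain of ideals is positive if `S ⊆ I k`. -/
def IsPositiveChain (k : ℕ) (I : ℕ → Set V) : Prop := D.S ⊆ I k

/-- The set of values `r₁ + … + r_m` over all expressions `α = α₁ + … + α_m` with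
`α_i ∈ I (r i)` and `1 ≤ r i ≤ k`; its least element (when it exists) is `r_α(𝓘)`. -/
def rVals (_D : RootSystemData V) (k : ℕ) (I : ℕ → Set V) (α : V) : Set ℕ :=
  {N | ∃ m : ℕ, ∃ a : Fin m → V, ∃ r : Fin m → ℕ,
    (∀ i, 1 ≤ r i ∧ r i ≤ k ∧ a i ∈ I (r i)) ∧ (∑ i, a i) = α ∧ (∑ i, r i) = N}

/-- The extension `𝓘̲` of a geometric chain of `k` ideals to a chain of `k+1` ideals,
with `I̲_{k+1} = ⋃_{i+j=k+1} ((I_i + I_j) ∩ Φ⁺) ∪ I_k ∪ S`. -/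
def Ibar (k : ℕ) (I : ℕ → Set V) : ℕ → Set V := fun i =>
  if i ≤ k then I i
  else (⋃ (p : ℕ × ℕ) (_ : p.1 + p.2 = k + 1), (I p.1 + I p.2) ∩ D.pos) ∪ I k ∪ D.S

/-- `α` is a rank `r` indecomposable element of the chain of ideals `I`. -/
def IsIndec (k : ℕ) (I : ℕ → Set V) (r : ℕ) (α : V) : Prop :=
  α ∈ I r ∧ IsLeast (D.rVals k I α) r ∧
  (∀ i j, i + j = r → α ∉ I i + I j) ∧
  (∀ β ∈ D.pos, ∀ t, t ≤ k → IsLeast (D.rVals k I (α + β)) t → β ∈ I (t - r))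

/-- The complement of the `k`-Catalan arrangement of `Φ`. -/
def catComp (k : ℕ) : Set V :=
  {x | ∀ α ∈ D.Φ, ∀ r : ℕ, r ≤ k → (inner ℝ x α : ℝ) ≠ (r : ℝ)}

/-- A region of the `k`-Catalan arrangement: a connected component of the complement. -/
def IsRegion (k : ℕ) (R : Set V) : Prop :=
  ∃ x ∈ D.catComp k, R = connectedComponentIn (D.catComp k) x

/-- A dominant region of the `k`-Catalan arrangement. -/
def IsDomRegion (k : ℕ) (R : Set V) : Prop :=
  D.IsRegion k R ∧ ∀ x ∈ R, ∀ α ∈ D.pos, 0 < (inner ℝ x α : ℝ)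

/-- The complement of the affine Coxeter arrangement of `Φ`. -/
def affComp : Set V := {x | ∀ α ∈ D.Φ, ∀ r : ℤ, (inner ℝ x α : ℝ) ≠ (r : ℝ)}

/-- An alcove: a connected component of the complement of the affine Coxeter arrangement. -/
def IsAlcove (A : Set V) : Prop :=
  ∃ x ∈ D.affComp, A = connectedComponentIn D.affComp x

/-- The hyperplane `H_α^r` supports a facet of `R`. -/
def IsWall (_D : RootSystemData V) (R : Set V) (α : V) (r : ℝ) : Prop :=
  ∃ x, (inner ℝ x α : ℝ) = r ∧ ∃ ε > 0, ∀ y, (inner ℝ y α : ℝ) = r → dist y x < ε → y ∈ closure R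

/-- `H_α^r` is a ceiling of the dominant region (or alcove) `R`: a wall not through
the origin with `R` on the same side as the origin. -/
def IsCeiling (R : Set V) (α : V) (r : ℝ) : Prop :=
  D.IsWall R α r ∧ 0 < r ∧ ∀ x ∈ R, (inner ℝ x α : ℝ) < r

/-- `H_α^r` is a floor of the dominant region (or alcove) `R`: a wall not through
the origin separating `R` from the origin. -/
def IsFloor (R : Set V) (α : V) (r : ℝ) : Prop :=
  D.IsWall R α r ∧ 0 < r ∧ ∀ x ∈ R, r < (inner ℝ x α : ℝ)

/-- The chain of ideals `θ(R)` associated to a dominant region `R`. -/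
def theta (R : Set V) : ℕ → Set V := fun i =>
  {α ∈ D.pos | ∀ x ∈ R, (inner ℝ x α : ℝ) < (i : ℝ)}

/-- `B` is the maximal alcove of the (bounded) region corresponding to the positive chain
of ideals `I`, i.e. the alcove with `r(B,α) = r_α(𝓘)` for all positive roots `α`. -/
def IsMaxAlcoveOf (k : ℕ) (I : ℕ → Set V) (B : Set V) : Prop :=
  D.IsAlcove B ∧ ∀ α ∈ D.pos, ∃ r : ℕ, IsLeast (D.rVals k I α) r ∧
    ∀ x ∈ B, ((r : ℝ) - 1 < (inner ℝ x α : ℝ) ∧ (inner ℝ x α : ℝ) < (r : ℝ))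

/-- The root system `Φ` is irreducible. -/
def Irred : Prop :=
  ∀ Φ₁ Φ₂ : Set V, Φ₁ ∪ Φ₂ = D.Φ → (∀ a ∈ Φ₁, ∀ b ∈ Φ₂, (inner ℝ a b : ℝ) = 0) →
    Φ₁ = ∅ ∨ Φ₂ = ∅

end RootSystemData

/-!
Two distinct floors `H_α^r`, `H_β^s` of a dominant region `R` make an obtuse angle. Otherwise
`α - β` is a root, say positive, and `R` lies in a strip `t < ⟪x, α - β⟫ < t + 1` (or above
`H_{α-β}^k`). A generic point of the facet on `H_α^r` gives `s + t < r`, one on `H_β^s` gives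
`r < s + t + 1`. Ceilings are handled the same way. Positive roots that are pairwise obtuse and
all positive at a point of `R` are linearly independent, so there are at most `n` of them, and a
root supports at most one floor and one ceiling.
-/

section InnerProductSpace

variable {V : Type*} [NormedAddCommGroup V] [InnerProductSpace ℝ V]

theorem real_inner_sq_lt_of_ne_smul {α β : V} (hα : α ≠ 0) (hβ : ∀ c : ℝ, β ≠ c • α) :
    ⟪α, β⟫ ^ 2 < ⟪α, α⟫ * ⟪β, β⟫ := by
  have hβ0 : β ≠ 0 := by simpa using hβ 0
  have hlt : |⟪α, β⟫| < ‖α‖ * ‖β‖ :=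
    (abs_real_inner_le_norm α β).lt_of_ne fun h =>
      let ⟨c, _, hc⟩ := (norm_inner_eq_norm_iff (𝕜 := ℝ) hα hβ0).1 h
      hβ c hc
  rw [real_inner_self_eq_norm_sq, real_inner_self_eq_norm_sq, ← mul_pow, ← sq_abs]
  exact pow_lt_pow_left₀ hlt (abs_nonneg _) two_ne_zero

theorem coeff_nonpos_of_sum_smul_eq_zero_of_pairwise_inner_nonpos {ι : Type*} {v : ι → V}
    {z : V} (hz : ∀ i, 0 < ⟪z, v i⟫) (hv : Pairwise fun i j => ⟪v i, v j⟫ ≤ 0)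
    {s : Finset ι} {g : ι → ℝ} (hg : ∑ i ∈ s, g i • v i = 0) : ∀ i ∈ s, g i ≤ 0 := by
  classical
  set P := s.filter fun i => 0 < g i
  set N := s.filter fun i => ¬ 0 < g i
  set u := ∑ i ∈ P, g i • v i
  have hu : u = -∑ j ∈ N, g j • v j := by
    rw [eq_neg_iff_add_eq_zero, Finset.sum_filter_add_sum_filter_not, hg]
  -- `u` is a positive combination of some `v i` and a nonpositive one of the others
  have hu0 : u = 0 := by
    have huu : ⟪u, u⟫ = -∑ j ∈ N, ∑ i ∈ P, g j * (g i * ⟪v i, v j⟫) := by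
      nth_rewrite 2 [hu]
      simp only [u, inner_neg_right, sum_inner, inner_sum, real_inner_smul_left,
        real_inner_smul_right]
    rw [← real_inner_self_nonpos, huu, neg_nonpos]
    refine Finset.sum_nonneg fun j hj => Finset.sum_nonneg fun i hi => ?_
    have hgi := (Finset.mem_filter.1 hi).2
    have hgj := not_lt.1 (Finset.mem_filter.1 hj).2
    have hij : i ≠ j := by rintro rfl; exact absurd hgi (not_lt.2 hgj)
    exact mul_nonneg_of_nonpos_of_nonpos hgj (mul_nonpos_of_nonneg_of_nonpos hgi.le (hv hij))
  intro i hi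
  by_contra! hgi
  have hzu : 0 < ⟪z, u⟫ := by
    simp only [u, inner_sum, real_inner_smul_right]
    exact Finset.sum_pos (fun j hj => mul_pos (Finset.mem_filter.1 hj).2 (hz j))
      ⟨i, Finset.mem_filter.2 ⟨hi, hgi⟩⟩
  simp [hu0] at hzu

theorem linearIndependent_of_pairwise_inner_nonpos {ι : Type*} {v : ι → V} {z : V}
    (hz : ∀ i, 0 < ⟪z, v i⟫) (hv : Pairwise fun i j => ⟪v i, v j⟫ ≤ 0) :
    LinearIndependent ℝ v := by
  refine linearIndependent_iff'.2 fun s g hg i hi =>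
    le_antisymm (coeff_nonpos_of_sum_smul_eq_zero_of_pairwise_inner_nonpos hz hv hg i hi) ?_
  have hg' : ∑ i ∈ s, (-g) i • v i = 0 := by
    simp only [Pi.neg_apply, neg_smul, Finset.sum_neg_distrib, hg, neg_zero]
  simpa using coeff_nonpos_of_sum_smul_eq_zero_of_pairwise_inner_nonpos hz hv hg' i hi

theorem sub_ne_smul_of_ne_smul {α β : V} (hβα : ∀ c : ℝ, α ≠ c • β) : ∀ c : ℝ, α - β ≠ c • β :=
  fun c hc => hβα (c + 1) (by rw [add_smul, one_smul, ← hc, sub_add_cancel])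

theorem le_inner_of_mem_closure {R : Set V} {v : V} {c : ℝ} (h : ∀ x ∈ R, c < ⟪x, v⟫)
    {y : V} (hy : y ∈ closure R) : c ≤ ⟪y, v⟫ :=
  closure_lt_subset_le (f := fun _ => c) (g := fun x => ⟪x, v⟫) continuous_const (by fun_prop)
    (closure_mono (fun x hx => h x hx) hy)

theorem inner_le_of_mem_closure {R : Set V} {v : V} {c : ℝ} (h : ∀ x ∈ R, ⟪x, v⟫ < c)
    {y : V} (hy : y ∈ closure R) : ⟪y, v⟫ ≤ c :=
  closure_lt_subset_le (f := fun x => ⟪x, v⟫) (g := fun _ => c) (by fun_prop) continuous_const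
    (closure_mono (fun x hx => h x hx) hy)

theorem IsPreconnected.exists_nat_strip {R : Set V} (hR : IsPreconnected R) {x₀ : V}
    (hx₀ : x₀ ∈ R) {γ : V} {k : ℕ} (hpos : ∀ x ∈ R, 0 < ⟪x, γ⟫)
    (havoid : ∀ x ∈ R, ∀ j : ℕ, j ≤ k → ⟪x, γ⟫ ≠ j) :
    ∃ t ≤ k, (∀ x ∈ R, (t : ℝ) < ⟪x, γ⟫) ∧ (t < k → ∀ x ∈ R, ⟪x, γ⟫ < t + 1) := by
  have hcross : ∀ a ∈ R, ∀ b ∈ R, ∀ j : ℕ, j ≤ k → ⟪a, γ⟫ ≤ j → (j : ℝ) ≤ ⟪b, γ⟫ → False := by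
    intro a ha b hb j hj haj hjb
    obtain ⟨x, hx, hxj⟩ := hR.intermediate_value ha hb
      (continuous_id.inner continuous_const).continuousOn ⟨haj, hjb⟩
    exact havoid x hx j hj hxj
  have hfloor := Nat.floor_le (hpos x₀ hx₀).le
  refine ⟨min k ⌊⟪x₀, γ⟫⌋₊, min_le_left _ _, fun x hx => ?_, fun htk x hx => ?_⟩
  · by_contra! hxt
    refine hcross x hx x₀ hx₀ _ (min_le_left _ _) hxt (le_trans ?_ hfloor)
    exact_mod_cast min_le_right _ _
  · rw [min_eq_right (by omega)] at htk ⊢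
    by_contra! hxt
    refine hcross x₀ hx₀ x hx (⌊⟪x₀, γ⟫⌋₊ + 1) htk ?_ (by push_cast; exact hxt)
    push_cast
    exact (Nat.lt_floor_add_one _).le

end InnerProductSpace

namespace RootSystemData

variable {V : Type*} [NormedAddCommGroup V] [InnerProductSpace ℝ V] {D : RootSystemData V}
  {R : Set V} {α β : V} {k : ℕ}

theorem IsWall.exists_mem_closure {r : ℝ} (hw : D.IsWall R α r) :
    ∃ y ∈ closure R, ⟪y, α⟫ = r := by
  obtain ⟨x, hx, ε, hε, hball⟩ := hw
  exact ⟨x, hball x hx (by simpa using hε), hx⟩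

theorem IsWall.exists_inner_ne {r : ℝ} (hw : D.IsWall R α r) (hβ : ∀ c : ℝ, β ≠ c • α)
    (b : ℝ) : ∃ y ∈ closure R, ⟪y, α⟫ = r ∧ ⟪y, β⟫ ≠ b := by
  obtain ⟨x, hx, ε, hε, hball⟩ := hw
  rcases ne_or_eq ⟪x, β⟫ b with hxb | hxb
  · exact ⟨x, hball x hx (by simpa using hε), hx, hxb⟩
  -- move inside the wall along the component `d` of `β` orthogonal to `α`
  set d := β - (⟪β, α⟫ / ⟪α, α⟫) • α
  have hd : d ≠ 0 := fun h => hβ _ (sub_eq_zero.1 h)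
  have hdα : ⟪d, α⟫ = 0 := by
    rw [inner_sub_left, real_inner_smul_left,
      div_mul_cancel_of_imp fun h => by rw [inner_self_eq_zero.1 h, inner_zero_right], sub_self]
  have hdβ : ⟪d, β⟫ = ‖d‖ ^ 2 := by
    have hβd : β - d = (⟪β, α⟫ / ⟪α, α⟫) • α := sub_sub_cancel _ _
    rw [← real_inner_self_eq_norm_sq, ← sub_eq_zero, ← inner_sub_right, hβd,
      real_inner_smul_right, hdα, mul_zero]
  have hdn : 0 < ‖d‖ := norm_pos_iff.2 hd
  set u := ε / (2 * ‖d‖)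
  have hu : 0 < u := by positivity
  have hyα : ⟪x + u • d, α⟫ = r := by
    rw [inner_add_left, real_inner_smul_left, hdα, mul_zero, add_zero, hx]
  refine ⟨x + u • d, hball _ hyα ?_, hyα, ?_⟩
  · rw [dist_eq_norm, add_sub_cancel_left, norm_smul, Real.norm_of_nonneg hu.le]
    calc u * ‖d‖ = ε / 2 := by rw [div_mul_eq_mul_div, mul_div_mul_right _ _ hdn.ne']
      _ < ε := half_lt_self hε
  · rw [inner_add_left, real_inner_smul_left, hdβ, hxb]
    exact (lt_add_of_pos_right b (by positivity)).ne'

theorem IsFloor.le_of_isWall {r s : ℝ} (hr : D.IsFloor R α r) (hs : D.IsWall R α s) :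
    r ≤ s := by
  obtain ⟨y, hy, rfl⟩ := hs.exists_mem_closure
  exact le_inner_of_mem_closure hr.2.2 hy

theorem IsCeiling.ge_of_isWall {r s : ℝ} (hr : D.IsCeiling R α r) (hs : D.IsWall R α s) :
    s ≤ r := by
  obtain ⟨y, hy, rfl⟩ := hs.exists_mem_closure
  exact inner_le_of_mem_closure hr.2.2 hy

theorem IsFloor.eq {r s : ℝ} (hr : D.IsFloor R α r) (hs : D.IsFloor R α s) : r = s :=
  le_antisymm (hr.le_of_isWall hs.1) (hs.le_of_isWall hr.1)

theorem IsCeiling.eq {r s : ℝ} (hr : D.IsCeiling R α r) (hs : D.IsCeiling R α s) : r = s :=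
  le_antisymm (hs.ge_of_isWall hr.1) (hr.ge_of_isWall hs.1)

theorem not_isFloor_of_isFloor_of_strip {r s t : ℕ} (hαβ : ∀ c : ℝ, β ≠ c • α)
    (hβα : ∀ c : ℝ, α ≠ c • β) (hrk : r ≤ k) (htk : t ≤ k)
    (hlow : ∀ x ∈ R, (t : ℝ) < ⟪x, α - β⟫) (hup : t < k → ∀ x ∈ R, ⟪x, α - β⟫ < t + 1)
    (hα : D.IsFloor R α r) : ¬ D.IsFloor R β s := by
  intro hβ
  obtain ⟨y, hy, hyα, hyβ⟩ := hα.1.exists_inner_ne hαβ s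
  have h₁ : (s : ℝ) < ⟪y, β⟫ := (le_inner_of_mem_closure hβ.2.2 hy).lt_of_ne' hyβ
  have h₂ := le_inner_of_mem_closure hlow hy
  rw [inner_sub_right, hyα] at h₂
  have hlt : s + t < r := by exact_mod_cast (by linarith : (s : ℝ) + t < r)
  obtain htk | rfl := htk.lt_or_eq
  · obtain ⟨z, hz, hzβ, hzγ⟩ := hβ.1.exists_inner_ne (sub_ne_smul_of_ne_smul hβα) (t + 1)
    have h₃ := (inner_le_of_mem_closure (hup htk) hz).lt_of_ne hzγ
    have h₄ := le_inner_of_mem_closure hα.2.2 hz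
    rw [inner_sub_right, hzβ] at h₃
    have : r < s + t + 1 := by exact_mod_cast (by linarith : (r : ℝ) < s + t + 1)
    omega
  · omega

theorem not_isCeiling_of_isCeiling_of_strip {r s t : ℕ} {x₀ : V} (hx₀ : x₀ ∈ R)
    (hβ₀ : 0 < ⟪x₀, β⟫) (hαβ : ∀ c : ℝ, β ≠ c • α) (hβα : ∀ c : ℝ, α ≠ c • β)
    (hrk : r ≤ k) (htk : t ≤ k)
    (hlow : ∀ x ∈ R, (t : ℝ) < ⟪x, α - β⟫) (hup : t < k → ∀ x ∈ R, ⟪x, α - β⟫ < t + 1)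
    (hα : D.IsCeiling R α r) : ¬ D.IsCeiling R β s := by
  intro hβ
  obtain htk | rfl := htk.lt_or_eq
  · obtain ⟨y, hy, hyα, hyβ⟩ := hα.1.exists_inner_ne hαβ s
    have h₁ := (inner_le_of_mem_closure hβ.2.2 hy).lt_of_ne hyβ
    have h₂ := inner_le_of_mem_closure (hup htk) hy
    rw [inner_sub_right, hyα] at h₂
    have : r < s + t + 1 := by exact_mod_cast (by linarith : (r : ℝ) < s + t + 1)
    obtain ⟨z, hz, hzβ, hzγ⟩ := hβ.1.exists_inner_ne (sub_ne_smul_of_ne_smul hβα) t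
    have h₃ := (le_inner_of_mem_closure hlow hz).lt_of_ne' hzγ
    have h₄ := inner_le_of_mem_closure hα.2.2 hz
    rw [inner_sub_right, hzβ] at h₃
    have : s + t < r := by exact_mod_cast (by linarith : (s : ℝ) + t < r)
    omega
  · have h₁ := hlow x₀ hx₀
    have h₂ := hα.2.2 x₀ hx₀
    have h₃ : (r : ℝ) ≤ t := by exact_mod_cast hrk
    rw [inner_sub_right] at h₁
    linarith

theorem neg_mem {γ : V} (hγ : γ ∈ D.Φ) : -γ ∈ D.Φ := by
  have h := D.reflect_mem γ hγ γ hγ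
  rwa [mul_div_assoc, div_self (inner_self_ne_zero.2 (D.ne_zero γ hγ)), mul_one, two_smul,
    sub_add_cancel_left] at h

theorem mem_pos_or_neg_mem_pos {γ : V} (hγ : γ ∈ D.Φ) : γ ∈ D.pos ∨ -γ ∈ D.pos :=
  (D.decomp γ hγ).imp (fun h => ⟨hγ, h⟩) (fun h => ⟨D.neg_mem hγ, h⟩)

theorem ne_smul_of_mem_pos (hα : α ∈ D.pos) (hβ : β ∈ D.pos) (hne : α ≠ β) {x : V}
    (hxα : 0 < ⟪x, α⟫) (hxβ : 0 < ⟪x, β⟫) : ∀ c : ℝ, β ≠ c • α := by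
  intro c hc
  obtain rfl | rfl := D.reduced α hα.1 c (hc ▸ hβ.1)
  · exact hne (by rw [hc, one_smul])
  · rw [hc, neg_one_smul, inner_neg_right] at hxβ
    linarith

theorem sub_mem_of_inner_pos (hα : α ∈ D.Φ) (hβ : β ∈ D.Φ) (hαβ : 0 < ⟪α, β⟫)
    (hns : ∀ c : ℝ, β ≠ c • α) : α - β ∈ D.Φ := by
  obtain ⟨m, hm⟩ := D.crystal α hα β hβ
  obtain ⟨m', hm'⟩ := D.crystal β hβ α hα
  have hαα : 0 < ⟪α, α⟫ := real_inner_self_pos.2 (D.ne_zero α hα)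
  have hββ : 0 < ⟪β, β⟫ := real_inner_self_pos.2 (D.ne_zero β hβ)
  rw [real_inner_comm] at hm
  have hm0 : (0 : ℝ) < m := hm ▸ by positivity
  have hm'0 : (0 : ℝ) < m' := hm' ▸ by positivity
  have hcs := real_inner_sq_lt_of_ne_smul (D.ne_zero α hα) hns
  -- the product of the two Cartan integers is `4 cos² ∠(α, β) < 4`
  have hprod : (m : ℝ) * m' < 4 := by
    rw [← hm, ← hm', div_mul_div_comm, div_lt_iff₀ (by positivity)]
    nlinarith
  have hone : m = 1 ∨ m' = 1 := by
    have : m * m' < 4 := by exact_mod_cast hprod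
    have : 0 < m := by exact_mod_cast hm0
    have : 0 < m' := by exact_mod_cast hm'0
    by_contra! h
    have : 2 ≤ m := by omega
    have : 2 ≤ m' := by omega
    nlinarith
  obtain h | h := hone
  · have hr := D.reflect_mem α hα β hβ
    rw [real_inner_comm, hm, h, Int.cast_one, one_smul] at hr
    simpa using D.neg_mem hr
  · have hr := D.reflect_mem β hβ α hα
    rwa [hm', h, Int.cast_one, one_smul] at hr

theorem inner_nonpos_of_sub_notMem_pos (hα : α ∈ D.pos) (hβ : β ∈ D.pos)
    (hαβ : ∀ c : ℝ, β ≠ c • α) (h₁ : α - β ∉ D.pos) (h₂ : β - α ∉ D.pos) : ⟪α, β⟫ ≤ 0 := by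
  by_contra! hip
  obtain hγ | hγ := D.mem_pos_or_neg_mem_pos (D.sub_mem_of_inner_pos hα.1 hβ.1 hip hαβ)
  · exact h₁ hγ
  · exact h₂ (by rwa [neg_sub] at hγ)

theorem IsRegion.isPreconnected (hR : D.IsRegion k R) : IsPreconnected R := by
  obtain ⟨_, -, rfl⟩ := hR
  exact isPreconnected_connectedComponentIn

theorem IsRegion.nonempty (hR : D.IsRegion k R) : R.Nonempty := by
  obtain ⟨x, hx, rfl⟩ := hR
  exact ⟨x, mem_connectedComponentIn hx⟩

theorem IsRegion.subset_catComp (hR : D.IsRegion k R) : R ⊆ D.catComp k := by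
  obtain ⟨x, -, rfl⟩ := hR
  exact connectedComponentIn_subset _ _

theorem IsDomRegion.exists_nat_strip (hR : D.IsDomRegion k R) {γ : V} (hγ : γ ∈ D.pos) :
    ∃ t ≤ k, (∀ x ∈ R, (t : ℝ) < ⟪x, γ⟫) ∧ (t < k → ∀ x ∈ R, ⟪x, γ⟫ < t + 1) :=
  hR.1.isPreconnected.exists_nat_strip hR.1.nonempty.some_mem (fun x hx => hR.2 x hx γ hγ)
    fun _ hx j hj => hR.1.subset_catComp hx γ hγ.1 j hj

theorem IsDomRegion.inner_nonpos_of_isFloor (hR : D.IsDomRegion k R) (hα : α ∈ D.pos)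
    (hβ : β ∈ D.pos) (hne : α ≠ β) {r s : ℕ} (hrk : r ≤ k) (hsk : s ≤ k)
    (hfα : D.IsFloor R α r) (hfβ : D.IsFloor R β s) : ⟪α, β⟫ ≤ 0 := by
  obtain ⟨x₀, hx₀⟩ := hR.1.nonempty
  have hαβ := D.ne_smul_of_mem_pos hα hβ hne (hR.2 x₀ hx₀ α hα) (hR.2 x₀ hx₀ β hβ)
  have hβα := D.ne_smul_of_mem_pos hβ hα hne.symm (hR.2 x₀ hx₀ β hβ) (hR.2 x₀ hx₀ α hα)
  refine D.inner_nonpos_of_sub_notMem_pos hα hβ hαβ (fun hγ => ?_) (fun hγ => ?_)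
  · obtain ⟨t, htk, hlow, hup⟩ := hR.exists_nat_strip hγ
    exact not_isFloor_of_isFloor_of_strip hαβ hβα hrk htk hlow hup hfα hfβ
  · obtain ⟨t, htk, hlow, hup⟩ := hR.exists_nat_strip hγ
    exact not_isFloor_of_isFloor_of_strip hβα hαβ hsk htk hlow hup hfβ hfα

theorem IsDomRegion.inner_nonpos_of_isCeiling (hR : D.IsDomRegion k R) (hα : α ∈ D.pos)
    (hβ : β ∈ D.pos) (hne : α ≠ β) {r s : ℕ} (hrk : r ≤ k) (hsk : s ≤ k)
    (hfα : D.IsCeiling R α r) (hfβ : D.IsCeiling R β s) : ⟪α, β⟫ ≤ 0 := by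
  obtain ⟨x₀, hx₀⟩ := hR.1.nonempty
  have hαβ := D.ne_smul_of_mem_pos hα hβ hne (hR.2 x₀ hx₀ α hα) (hR.2 x₀ hx₀ β hβ)
  have hβα := D.ne_smul_of_mem_pos hβ hα hne.symm (hR.2 x₀ hx₀ β hβ) (hR.2 x₀ hx₀ α hα)
  refine D.inner_nonpos_of_sub_notMem_pos hα hβ hαβ (fun hγ => ?_) (fun hγ => ?_)
  · obtain ⟨t, htk, hlow, hup⟩ := hR.exists_nat_strip hγ
    exact not_isCeiling_of_isCeiling_of_strip hx₀ (hR.2 x₀ hx₀ β hβ) hαβ hβα hrk htk hlow hup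
      hfα hfβ
  · obtain ⟨t, htk, hlow, hup⟩ := hR.exists_nat_strip hγ
    exact not_isCeiling_of_isCeiling_of_strip hx₀ (hR.2 x₀ hx₀ α hα) hβα hαβ hsk htk hlow hup
      hfβ hfα

theorem natCard_le_ncard_S_of_pairwise_inner_nonpos {ι : Type*} {v : ι → V}
    (hv : ∀ i, v i ∈ D.pos) {z : V} (hz : ∀ i, 0 < ⟪z, v i⟫)
    (hobt : Pairwise fun i j => ⟪v i, v j⟫ ≤ 0) : Nat.card ι ≤ D.S.ncard := by
  set W := Submodule.span ℝ D.S
  have hvW : ∀ i, v i ∈ W := fun i =>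
    (AddSubmonoid.closure_le (S := W.toAddSubmonoid)).2 Submodule.subset_span (hv i).2
  have hS : D.S.Finite := D.finite.subset D.S_sub
  have : Module.Finite ℝ W := Module.Finite.span_of_finite ℝ hS
  have hli : LinearIndependent ℝ fun i => (⟨v i, hvW i⟩ : W) :=
    .of_comp W.subtype (linearIndependent_of_pairwise_inner_nonpos hz hobt)
  have : Fintype ι := @Fintype.ofFinite ι hli.finite
  have : Fintype D.S := hS.fintype
  calc Nat.card ι = Fintype.card ι := Nat.card_eq_fintype_card
    _ ≤ Module.finrank ℝ W := hli.fintype_card_le_finrank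
    _ = D.S.ncard := by
      rw [← Nat.card_coe_set_eq, Nat.card_eq_fintype_card, ← finrank_span_eq_card D.S_indep,
        Subtype.range_coe]

end RootSystemData

/-- Every dominant region of the `k`-Catalan arrangement of a root system
of rank `n` has at most `n` floors and at most `n` ceilings. -/
theorem statement12 {V : Type*} [NormedAddCommGroup V] [InnerProductSpace ℝ V]
    (D : RootSystemData V) (n : ℕ) (hrank : D.S.ncard = n)
    (k : ℕ) (R : Set V) (hR : D.IsDomRegion k R) :
    {p : V × ℕ | p.1 ∈ D.pos ∧ 1 ≤ p.2 ∧ p.2 ≤ k ∧ D.IsFloor R p.1 (p.2 : ℝ)}.ncard ≤ n ∧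
    {p : V × ℕ | p.1 ∈ D.pos ∧ 1 ≤ p.2 ∧ p.2 ≤ k ∧ D.IsCeiling R p.1 (p.2 : ℝ)}.ncard ≤ n := by
  obtain ⟨x₀, hx₀⟩ := hR.1.nonempty
  subst hrank
  refine ⟨?_, ?_⟩ <;> rw [← Nat.card_coe_set_eq] <;>
    refine D.natCard_le_ncard_S_of_pairwise_inner_nonpos (v := fun p => p.1.1) (fun p => p.2.1)
      (fun p => hR.2 x₀ hx₀ _ p.2.1) ?_
  · intro ⟨⟨α, r⟩, hα, _, hrk, hfα⟩ ⟨⟨β, s⟩, hβ, _, hsk, hfβ⟩ hne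
    refine hR.inner_nonpos_of_isFloor hα hβ (fun hαβ => hne ?_) hrk hsk hfα hfβ
    subst hαβ
    obtain rfl : r = s := by exact_mod_cast hfα.eq hfβ
    rfl
  · intro ⟨⟨α, r⟩, hα, _, hrk, hfα⟩ ⟨⟨β, s⟩, hβ, _, hsk, hfβ⟩ hne
    refine hR.inner_nonpos_of_isCeiling hα hβ (fun hαβ => hne ?_) hrk hsk hfα hfβ
    subst hαβ
    obtain rfl : r = s := by exact_mod_cast hfα.eq hfβ
    rfl
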